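/- arXiv:1710.03389 — 3 statements merged into one kernel-verified Lean document; each statement's English description precedes it below -/
import Mathlib

section
/- Fix θ ∈ (0, 2π) with θ ≠ π and let O = [[cos θ, sin θ], [−sin θ, cos θ]]. Let A : ℝ² → M₂(ℂ) be smooth, Hermitian-valued, and satisfy A(Oᵀx) = A(x) for all x ∈ ℝ². Then the two conditions (A(Oᵀx) = Oᵀ A(x) O for all x) and (A(x) = conj(A(−x)) for all x) both hold if and only if there exist real-valued functions a, b : ℝ² → ℝ such that A(x) = a(x) I + b(x) σ₂ for all x, with a(Oᵀx) = a(x), a(−x) = a(x), b(Oᵀx) = b(x), and b(−x) = −b(x) for all x ∈ ℝ². -/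
open Matrix MeasureTheory Complex

noncomputable section

abbrev V2 : Type := Fin 2 → ℝ
abbrev M2 : Type := Matrix (Fin 2) (Fin 2) ℂ

/-- Partial derivative in coordinate direction `i`. -/
noncomputable def pd (i : Fin 2) (f : V2 → ℂ) (x : V2) : ℂ :=
  fderiv ℝ f x (Pi.single i 1)

/-- The divergence-form operator `L^A f = -∑ ∂_i (a_{ij} ∂_j f)`. -/
noncomputable def LA (A : V2 → M2) (f : V2 → ℂ) (x : V2) : ℂ :=
  -∑ i : Fin 2, ∑ j : Fin 2, pd i (fun y => A y i j * pd j f y) x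

/-- Complexification of a real matrix. -/
def cM (O : Matrix (Fin 2) (Fin 2) ℝ) : M2 := O.map (fun t => (t : ℂ))

/-- The Pauli matrix `σ₂ = [[0,-i],[i,0]]`. -/
def sigma2 : M2 := !![0, -Complex.I; Complex.I, 0]

/-- For a non-trivial rotation `O`, and `A` smooth, Hermitian-valued and
`𝒪`-invariant (`A(Oᵀx) = A(x)`), the conditions `A(Oᵀ x) = Oᵀ A(x) O` and
`A(x) = conj (A(-x))` both hold iff `A = a I + b σ₂` with `a` even, `b` odd,
both real and `𝒪`-invariant. -/
theorem rotation_invariant_PC_characterization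
    (θ : ℝ) (hθ1 : 0 < θ) (hθ2 : θ < 2 * Real.pi) (hθ3 : θ ≠ Real.pi)
    (O : Matrix (Fin 2) (Fin 2) ℝ)
    (hO : O = !![Real.cos θ, Real.sin θ; -Real.sin θ, Real.cos θ])
    (A : V2 → M2)
    (hsm : ∀ i j, ContDiff ℝ (⊤ : ℕ∞) fun x => A x i j)
    (hherm : ∀ x : V2, (A x).IsHermitian)
    (hinv : ∀ x : V2, A (Oᵀ.mulVec x) = A x) :
    ((∀ x : V2, A (Oᵀ.mulVec x) = (cM O)ᵀ * A x * cM O) ∧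
        (∀ x : V2, A x = (A (-x)).map (starRingEnd ℂ))) ↔
      (∃ a b : V2 → ℝ,
        (∀ x : V2, A x = ((a x : ℂ) • (1 : M2) + (b x : ℂ) • sigma2)) ∧
        (∀ x : V2, a (Oᵀ.mulVec x) = a x) ∧ (∀ x : V2, a (-x) = a x) ∧
        (∀ x : V2, b (Oᵀ.mulVec x) = b x) ∧ (∀ x : V2, b (-x) = - b x)) := by
  have hcs : (Real.cos θ : ℂ)^2 + (Real.sin θ : ℂ)^2 = 1 := by
    norm_cast; exact Real.cos_sq_add_sin_sq θ
  have hsin : Real.sin θ ≠ 0 := by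
    rcases lt_or_gt_of_ne hθ3 with h | h
    · exact (Real.sin_pos_of_pos_of_lt_pi hθ1 h).ne'
    · have h1 : 0 < Real.sin (θ - Real.pi) :=
        Real.sin_pos_of_pos_of_lt_pi (by linarith) (by linarith)
      rw [Real.sin_sub_pi] at h1
      linarith [h1, abs_nonneg (Real.sin θ)]
      
  have hsinC : (Real.sin θ : ℂ) ≠ 0 := by exact_mod_cast hsin
  have hOtO : (cM O)ᵀ * cM O = 1 := by
    subst hO
    ext i j
    fin_cases i <;> fin_cases j <;>
      simp [cM, Matrix.mul_apply, Fin.sum_univ_two, Matrix.one_apply] <;>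
      push_cast <;> first | ring1 | linear_combination Complex.cos_sq_add_sin_sq (θ:ℂ)
  have hOOt : cM O * (cM O)ᵀ = 1 := by
    subst hO
    ext i j
    fin_cases i <;> fin_cases j <;>
      simp [cM, Matrix.mul_apply, Fin.sum_univ_two, Matrix.one_apply] <;>
      push_cast <;> first | ring1 | linear_combination Complex.cos_sq_add_sin_sq (θ:ℂ)
  have hσ : cM O * sigma2 = sigma2 * cM O := by
    subst hO
    ext i j
    fin_cases i <;> fin_cases j <;>
      simp [cM, sigma2, Matrix.mul_apply, Fin.sum_univ_two] <;> ring
  have key : ∀ x y : ℂ, (cM O)ᵀ * ((x • (1:M2)) + y • sigma2) * cM O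
      = x • (1:M2) + y • sigma2 := by
    intro x y
    have hswap : (x • (1:M2) + y • sigma2) * cM O = cM O * (x • (1:M2) + y • sigma2) := by
      rw [add_mul, mul_add, Matrix.smul_mul, Matrix.mul_smul,
        Matrix.smul_mul, Matrix.mul_smul, one_mul, mul_one, hσ]
    calc (cM O)ᵀ * (x • (1:M2) + y • sigma2) * cM O
        = (cM O)ᵀ * ((x • (1:M2) + y • sigma2) * cM O) := mul_assoc _ _ _
      _ = (cM O)ᵀ * (cM O * (x • (1:M2) + y • sigma2)) := by rw [hswap]
      _ = ((cM O)ᵀ * cM O) * (x • (1:M2) + y • sigma2) := (mul_assoc _ _ _).symm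
      _ = _ := by rw [hOtO, one_mul]
  constructor
  · rintro ⟨h1, h2⟩
    refine ⟨fun x => (A x 0 0).re, fun x => (A x 0 1 * Complex.I).re, ?_, ?_, ?_, ?_, ?_⟩
    · intro x
      have hc0 : A x = (cM O)ᵀ * A x * cM O := (hinv x).symm.trans (h1 x)
      have hc : cM O * A x = A x * cM O := by
        calc cM O * A x = cM O * ((cM O)ᵀ * A x * cM O) := by rw [← hc0]
          _ = (cM O * (cM O)ᵀ) * (A x * cM O) := by
              rw [mul_assoc, mul_assoc]
          _ = A x * cM O := by rw [hOOt, one_mul]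
      have e00 := congrFun (congrFun hc 0) 0
      have e01 := congrFun (congrFun hc 0) 1
      simp [cM, hO, Matrix.mul_apply, Fin.sum_univ_two] at e00 e01
      simp only [← Complex.ofReal_sin, ← Complex.ofReal_cos] at e00 e01
      have hr : A x 1 0 = -(A x 0 1) := by
        have h' : (Real.sin θ : ℂ) * (A x 1 0 + A x 0 1) = 0 := by linear_combination e00
        have := (mul_eq_zero.mp h').resolve_left hsinC
        linear_combination this
      have ht : A x 1 1 = A x 0 0 := by
        have h' : (Real.sin θ : ℂ) * (A x 1 1 - A x 0 0) = 0 := by linear_combination e01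
        have := (mul_eq_zero.mp h').resolve_left hsinC
        linear_combination this
      have hH := hherm x
      have hp : (starRingEnd ℂ) (A x 0 0) = A x 0 0 := by
        have := congrFun (congrFun hH 0) 0
        simpa [Matrix.conjTranspose_apply] using this
      have hq : (starRingEnd ℂ) (A x 0 1) = -(A x 0 1) := by
        have := congrFun (congrFun hH 1) 0
        simp only [Matrix.conjTranspose_apply] at this
        rw [hr] at this
        exact this
      have hpim : (A x 0 0).im = 0 := by
        have := congrArg Complex.im hp
        simp [Complex.conj_im] at this
        linarith
      have hqre : (A x 0 1).re = 0 := by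
        have := congrArg Complex.re hq
        simp [Complex.conj_re] at this
        linarith
      ext i j
      fin_cases i <;> fin_cases j <;>
        simp [sigma2, Matrix.one_apply, hr, ht, Complex.ext_iff, Complex.mul_re,
          Complex.mul_im, hpim, hqre]
    · intro x; dsimp only; rw [hinv]
    · intro x
      have := congrFun (congrFun (h2 x) 0) 0
      dsimp only; rw [this]; simp [Matrix.map_apply]
    · intro x; dsimp only; rw [hinv]
    · intro x
      have := congrFun (congrFun (h2 x) 0) 1
      dsimp only; rw [this]
      simp [Matrix.map_apply, Complex.mul_re]
  · rintro ⟨a, b, hA, ha1, ha2, hb1, hb2⟩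
    constructor
    · intro x
      rw [hinv, hA x]
      exact (key _ _).symm
    · intro x
      rw [hA x, hA (-x), ha2, hb2]
      ext i j
      fin_cases i <;> fin_cases j <;>
        simp [sigma2, Matrix.map_apply, Matrix.one_apply] <;> ring
end
end

section
/- Let R = [[−1/2, √3/2], [−√3/2, −1/2]] and let A : ℝ² → M₂(ℂ) be smooth with A(Rᵀx) = Rᵀ A(x) R for all x ∈ ℝ². Then for every smooth f : ℝ² → ℂ, every x ∈ ℝ², and j = 1, 2, one has (𝒜_j f)(Rᵀ x) = Σ_{s=1}^{2} (Rᵀ)_{js} (𝒜_s (f ∘ (Rᵀ ·)))(x); that is, the vector operator 𝒜 satisfies ℛ ∘ 𝒜 = Rᵀ (𝒜 ∘ ℛ), where (ℛ g)(x) = g(Rᵀ x). -/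
open Matrix MeasureTheory Complex

noncomputable section

/-- The 120° clockwise rotation matrix. -/
def Rmat : Matrix (Fin 2) (Fin 2) ℝ := !![-1/2, Real.sqrt 3/2; -Real.sqrt 3/2, -1/2]

/-- The vector operator 𝒜 associated with `A`:
`(𝒜_j f)(x) = ∑_l [a_{jl}(x) (-i ∂_l f)(x) + (-i) ∂_l (a_{lj} f)(x)]`. -/
noncomputable def opA (A : V2 → M2) (j : Fin 2) (f : V2 → ℂ) (x : V2) : ℂ :=
  ∑ l : Fin 2,
    (A x j l * (-Complex.I * pd l f x) + (-Complex.I) * pd l (fun y => A y l j * f y) x)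



lemma clm_apply_fin2 (φ : V2 →L[ℝ] ℂ) (v : V2) :
    φ v = ∑ m : Fin 2, (v m : ℂ) * φ (Pi.single m 1) := by
  have hv : v = ∑ m : Fin 2, v m • (Pi.single m 1 : V2) := by
    ext i
    fin_cases i <;> simp [Fin.sum_univ_two, Pi.single_apply]
  calc φ v = φ (∑ m : Fin 2, v m • (Pi.single m 1 : V2)) := by rw [← hv]
  _ = ∑ m : Fin 2, v m • φ (Pi.single m 1) := by rw [map_sum]; simp
  _ = ∑ m : Fin 2, (v m : ℂ) * φ (Pi.single m 1) := by
      simp [Complex.real_smul]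

def mvL (O : Matrix (Fin 2) (Fin 2) ℝ) : V2 →L[ℝ] V2 :=
  ⟨O.mulVecLin, LinearMap.continuous_of_finiteDimensional _⟩

lemma diff_comp (O : Matrix (Fin 2) (Fin 2) ℝ) (u : V2 → ℂ) (hu : Differentiable ℝ u) :
    Differentiable ℝ (fun y => u (O.mulVec y)) :=
  hu.comp (mvL O).differentiable

lemma pd_comp (O : Matrix (Fin 2) (Fin 2) ℝ) (u : V2 → ℂ) (hu : Differentiable ℝ u)
    (l : Fin 2) (x : V2) :
    pd l (fun y => u (O.mulVec y)) x
      = ∑ m : Fin 2, ((O m l : ℝ) : ℂ) * pd m u (O.mulVec x) := by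
  have h1 : (fun y => u (O.mulVec y)) = u ∘ (mvL O) := rfl
  have hd : fderiv ℝ (u ∘ (mvL O)) x = (fderiv ℝ u ((mvL O) x)).comp (mvL O) := by
    rw [fderiv_comp x (hu.differentiableAt) ((mvL O).differentiableAt), (mvL O).fderiv]
  have hx : (mvL O) x = O.mulVec x := rfl
  have hs : (mvL O) (Pi.single l 1) = fun m => O m l := by
    ext m
    simp [mvL, Matrix.mulVecLin_apply, Matrix.mulVec_single]
  unfold pd
  rw [h1, hd]
  rw [ContinuousLinearMap.comp_apply, hs, hx, clm_apply_fin2]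

lemma pd_mul (a b : V2 → ℂ) (x : V2) (ha : DifferentiableAt ℝ a x)
    (hb : DifferentiableAt ℝ b x) (l : Fin 2) :
    pd l (fun y => a y * b y) x = pd l a x * b x + a x * pd l b x := by
  unfold pd
  rw [fderiv_fun_mul ha hb]
  simp [smul_eq_mul]
  ring

lemma pd_const_mul (c : ℂ) (g : V2 → ℂ) (x : V2) (hg : DifferentiableAt ℝ g x) (l : Fin 2) :
    pd l (fun y => c * g y) x = c * pd l g x := by
  unfold pd; rw [fderiv_const_mul hg c]; simp

lemma pd_sum4 (g : Fin 2 → Fin 2 → V2 → ℂ) (x : V2) (l : Fin 2)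
    (hg : ∀ p q, DifferentiableAt ℝ (g p q) x) :
    pd l (fun y => ∑ p : Fin 2, ∑ q : Fin 2, g p q y) x
      = ∑ p : Fin 2, ∑ q : Fin 2, pd l (g p q) x := by
  unfold pd
  rw [show (fun y => ∑ p : Fin 2, ∑ q : Fin 2, g p q y)
      = fun y => ∑ pq ∈ (Finset.univ : Finset (Fin 2 × Fin 2)), g pq.1 pq.2 y by
    funext y; rw [← Finset.sum_product']; rfl]
  rw [fderiv_fun_sum (fun pq _ => hg pq.1 pq.2)]
  rw [ContinuousLinearMap.sum_apply, ← Finset.sum_product']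
  rfl

lemma sqrt3_sq : Real.sqrt 3 * Real.sqrt 3 = 3 := Real.mul_self_sqrt (by norm_num)

lemma Rt00 : Rmatᵀ 0 0 = -(1/2) := by simp [Rmat, Matrix.transpose_apply]; norm_num
lemma Rt01 : Rmatᵀ 0 1 = -(Real.sqrt 3/2) := by simp [Rmat, Matrix.transpose_apply]; ring
lemma Rt10 : Rmatᵀ 1 0 = Real.sqrt 3/2 := by simp [Rmat, Matrix.transpose_apply]
lemma Rt11 : Rmatᵀ 1 1 = -(1/2) := by simp [Rmat, Matrix.transpose_apply]; norm_num

lemma Rmat_t : Rmatᵀ = !![-1/2, -Real.sqrt 3/2; Real.sqrt 3/2, -1/2] := by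
  ext i j; fin_cases i <;> fin_cases j <;> simp [Rmat]

lemma Rorth1 : Rmat * Rmatᵀ = 1 := by
  rw [Rmat_t]
  ext i j
  fin_cases i <;> fin_cases j <;>
    · simp [Rmat, Matrix.mul_apply, Fin.sum_univ_two, Matrix.one_fin_two]
      nlinarith [sqrt3_sq]

lemma cM_mul (P Q : Matrix (Fin 2) (Fin 2) ℝ) : cM (P * Q) = cM P * cM Q :=
  Matrix.map_mul (L := P) (M := Q) (f := Complex.ofRealHom)

lemma cM_one : cM 1 = 1 :=
  Matrix.map_one (fun t : ℝ => (t:ℂ)) (by simp) (by simp)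

lemma cM_t (P : Matrix (Fin 2) (Fin 2) ℝ) : (cM P)ᵀ = cM Pᵀ := by
  simp [cM, Matrix.transpose_map]

lemma cMorth1 : cM Rmat * (cM Rmat)ᵀ = 1 := by
  rw [cM_t, ← cM_mul, Rorth1, cM_one]

set_option maxHeartbeats 2000000 in
/-- If `A(Rᵀx) = Rᵀ A(x) R`, then `ℛ ∘ 𝒜 = Rᵀ (𝒜 ∘ ℛ)`, i.e.
`(𝒜_j f)(Rᵀ x) = ∑_s (Rᵀ)_{js} (𝒜_s (f ∘ Rᵀ))(x)`. -/
theorem opA_rotation_commutation (A : V2 → M2)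
    (hsm : ∀ i j, ContDiff ℝ (⊤ : ℕ∞) fun x => A x i j)
    (hrot : ∀ x : V2, A (Rmatᵀ.mulVec x) = (cM Rmat)ᵀ * A x * cM Rmat)
    (f : V2 → ℂ) (hf : ContDiff ℝ (⊤ : ℕ∞) f) (x : V2) (j : Fin 2) :
    opA A j f (Rmatᵀ.mulVec x) =
      ∑ s : Fin 2, ((Rmatᵀ j s : ℝ) : ℂ) * opA A s (fun y => f (Rmatᵀ.mulVec y)) x := by
  have hfd : Differentiable ℝ f := hf.differentiable (by simp)
  have hAd : ∀ p q, Differentiable ℝ (fun y => A y p q) :=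
    fun p q => (hsm p q).differentiable (by simp)
  -- inverse of the rotation identity
  have hAinv : ∀ y, A y = cM Rmat * A (Rmatᵀ.mulVec y) * (cM Rmat)ᵀ := by
    intro y
    rw [hrot y]
    have hassoc : cM Rmat * ((cM Rmat)ᵀ * A y * cM Rmat) * (cM Rmat)ᵀ
        = (cM Rmat * (cM Rmat)ᵀ) * A y * (cM Rmat * (cM Rmat)ᵀ) := by
      noncomm_ring
    rw [hassoc, cMorth1]
    simp
  have hAent : ∀ y (l s : Fin 2), A y l s = ∑ p : Fin 2, ∑ q : Fin 2,
      ((Rmatᵀ p l : ℝ):ℂ) * ((Rmatᵀ q s : ℝ):ℂ) * A (Rmatᵀ.mulVec y) p q := by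
    intro y l s
    conv_lhs => rw [hAinv y]
    simp [Matrix.mul_apply, cM, Matrix.map_apply, Matrix.transpose_apply, Fin.sum_univ_two]
    ring
  have h1 : ∀ l : Fin 2, pd l (fun y => f (Rmatᵀ.mulVec y)) x
      = ∑ m : Fin 2, ((Rmatᵀ m l : ℝ):ℂ) * pd m f (Rmatᵀ.mulVec x) :=
    fun l => pd_comp Rmatᵀ f hfd l x
  have h3 : ∀ l : Fin 2, pd l (fun y => A y l j * f y) (Rmatᵀ.mulVec x)
      = pd l (fun y => A y l j) (Rmatᵀ.mulVec x) * f (Rmatᵀ.mulVec x)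
        + A (Rmatᵀ.mulVec x) l j * pd l f (Rmatᵀ.mulVec x) :=
    fun l => pd_mul _ _ _ ((hAd l j).differentiableAt) hfd.differentiableAt l
  have h2 : ∀ l s : Fin 2, pd l (fun y => A y l s * f (Rmatᵀ.mulVec y)) x
      = ∑ p : Fin 2, ∑ q : Fin 2, ((Rmatᵀ p l : ℝ):ℂ) * ((Rmatᵀ q s : ℝ):ℂ) *
          (∑ m : Fin 2, ((Rmatᵀ m l : ℝ):ℂ) *
            (pd m (fun w => A w p q) (Rmatᵀ.mulVec x) * f (Rmatᵀ.mulVec x)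
              + A (Rmatᵀ.mulVec x) p q * pd m f (Rmatᵀ.mulVec x))) := by
    intro l s
    have hfun : (fun y => A y l s * f (Rmatᵀ.mulVec y))
        = fun y => ∑ p : Fin 2, ∑ q : Fin 2,
            (((Rmatᵀ p l : ℝ):ℂ) * ((Rmatᵀ q s : ℝ):ℂ)) *
              ((fun w => A w p q * f w) (Rmatᵀ.mulVec y)) := by
      funext y
      rw [hAent y l s, Finset.sum_mul]
      refine Finset.sum_congr rfl fun p _ => ?_
      rw [Finset.sum_mul]
      refine Finset.sum_congr rfl fun q _ => ?_
      simp only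
      ring
    rw [hfun]
    rw [pd_sum4 _ x l (fun p q =>
      (((diff_comp Rmatᵀ _ ((hAd p q).fun_mul hfd)).const_mul _).differentiableAt))]
    refine Finset.sum_congr rfl fun p _ => Finset.sum_congr rfl fun q _ => ?_
    rw [pd_const_mul _ _ x ((diff_comp Rmatᵀ _ ((hAd p q).fun_mul hfd)).differentiableAt) l]
    rw [pd_comp Rmatᵀ _ ((hAd p q).fun_mul hfd) l x]
    congr 1
    refine Finset.sum_congr rfl fun m _ => ?_
    rw [pd_mul _ _ _ ((hAd p q).differentiableAt) hfd.differentiableAt m]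
  simp only [opA]
  simp only [h1, h2, h3]
  simp only [hAent x]
  simp only [Fin.sum_univ_two]
  have ht2 : ((Real.sqrt 3 : ℝ) : ℂ)^2 = 3 := by
    rw [← Complex.ofReal_pow]
    norm_num [Real.sq_sqrt]
  have ht3 : ((Real.sqrt 3 : ℝ) : ℂ)^3 = 3 * ((Real.sqrt 3 : ℝ) : ℂ) := by
    rw [pow_succ, ht2]
  have ht4 : ((Real.sqrt 3 : ℝ) : ℂ)^4 = 9 := by
    rw [show (4:ℕ) = 2+2 from rfl, pow_add, ht2]; norm_num
  fin_cases j <;>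
  · simp only [Fin.zero_eta, Fin.mk_one, Fin.isValue, Rt00, Rt01, Rt10, Rt11]
    push_cast
    ring_nf
    simp only [ht2, ht3, ht4]
    ring_nf
end
end

section
/- Let η : ℝ → ℝ be continuous with η(ζ) → η_∞ as ζ → +∞ and η(ζ) → −η_∞ as ζ → −∞, for some constant η_∞ > 0 (a domain-wall function). Let υ_F > 0, θ ∈ ℝ with θ ≠ 0, and 𝔎 = (𝔎⁽¹⁾, 𝔎⁽²⁾) ∈ ℝ² with 𝔎 ≠ 0. For κ ∈ ℝ² set M(κ) = υ_F [[0, κ⁽¹⁾ + iκ⁽²⁾], [κ⁽¹⁾ − iκ⁽²⁾, 0]]; set 𝔎⊥ = (−𝔎⁽²⁾, 𝔎⁽¹⁾), ẑ = (𝔎⊥⁽¹⁾ + i𝔎⊥⁽²⁾)/|𝔎⊥|, and χ_± = (1/√2)(ẑ, ±1)ᵀ ∈ ℂ². Define α : ℝ → ℂ² by α(ζ) = exp(−(|θ|/(υ_F|𝔎|)) ∫₀^ζ η(s) ds) · χ₋ if θ > 0, and α(ζ) = exp(−(|θ|/(υ_F|𝔎|)) ∫₀^ζ η(s) ds) ·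 χ₊ if θ < 0. Then α is differentiable, satisfies the one-dimensional Dirac equation −i M(𝔎) α′(ζ) + θ η(ζ) σ₃ α(ζ) = 0 for all ζ ∈ ℝ, and α belongs to L²(ℝ; ℂ²). -/
/-!
Since `ẑ |𝔎| = i (𝔎⁽¹⁾ + i𝔎⁽²⁾)`, the spinors `χ_±` satisfy `i M(𝔎) χ_± = ±υ_F |𝔎| σ₃ χ_±`.
Hence for `α = f • χ_∓` the Dirac equation collapses to the scalar equation
`f' = -(|θ| / (υ_F |𝔎|)) η f`, solved by the exponential of the primitive of `η`.
Square integrability comes from the domain wall: `η ≥ η_∞ / 2` far to the right and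
`η ≤ -η_∞ / 2` far to the left, so `f` decays exponentially at both ends.
-/

open Matrix MeasureTheory Complex

noncomputable section

/-- `σ₃ = [[1,0],[0,-1]]`. -/
def sigma3 : Matrix (Fin 2) (Fin 2) ℂ := !![1, 0; 0, -1]

/-- `M(κ) = υ_F [[0, κ₁ + iκ₂], [κ₁ - iκ₂, 0]]`. -/
noncomputable def Mmat (υF : ℝ) (κ : Fin 2 → ℝ) : Matrix (Fin 2) (Fin 2) ℂ :=
  (υF : ℂ) • !![0, (κ 0 : ℂ) + Complex.I * (κ 1 : ℂ);
                (κ 0 : ℂ) - Complex.I * (κ 1 : ℂ), 0]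

/-- Euclidean norm on ℝ². -/
noncomputable def enorm' (w : Fin 2 → ℝ) : ℝ := Real.sqrt ((w 0) ^ 2 + (w 1) ^ 2)

open Set Filter

theorem enorm'_sq (K : Fin 2 → ℝ) : enorm' K ^ 2 = K 0 ^ 2 + K 1 ^ 2 :=
  Real.sq_sqrt (by positivity)

theorem enorm'_pos {K : Fin 2 → ℝ} (hK : K ≠ 0) : 0 < enorm' K := by
  refine Real.sqrt_pos.mpr ?_
  by_contra! h
  have h0 : K 0 = 0 := by nlinarith [sq_nonneg (K 0), sq_nonneg (K 1)]
  have h1 : K 1 = 0 := by nlinarith [sq_nonneg (K 0), sq_nonneg (K 1)]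
  exact hK (funext fun i => by fin_cases i <;> assumption)

theorem enorm'_perp (K : Fin 2 → ℝ) : enorm' ![-K 1, K 0] = enorm' K := by
  simp only [enorm', Matrix.cons_val_zero, Matrix.cons_val_one, neg_sq, add_comm]

theorem Mmat_mulVec (υF : ℝ) (K : Fin 2 → ℝ) (a b : ℂ) :
    Mmat υF K *ᵥ ![a, b] = ![υF * (K 0 + I * K 1) * b, υF * (K 0 - I * K 1) * a] := by
  ext i
  fin_cases i <;> simp [Mmat] <;> ring

theorem sigma3_mulVec (a b : ℂ) : sigma3 *ᵥ ![a, b] = ![a, -b] := by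
  ext i
  fin_cases i <;> simp [sigma3]

theorem I_smul_Mmat_mulVec (υF : ℝ) {K : Fin 2 → ℝ} (hK : enorm' K ≠ 0) {zhat : ℂ}
    (hz : zhat * enorm' K = I * (K 0 + I * K 1)) {s : ℝ} (hs : s ^ 2 = 1) :
    I • (Mmat υF K *ᵥ ![zhat, s]) = ((s * υF * enorm' K : ℝ) : ℂ) • (sigma3 *ᵥ ![zhat, s]) := by
  have hKC : (enorm' K : ℂ) ≠ 0 := by exact_mod_cast hK
  have hK2 : (enorm' K : ℂ) ^ 2 = K 0 ^ 2 + K 1 ^ 2 := by exact_mod_cast enorm'_sq K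
  have hsC : (s : ℂ) ^ 2 = 1 := by exact_mod_cast hs
  rw [Mmat_mulVec, sigma3_mulVec]
  simp only [smul_cons, Matrix.smul_empty, smul_eq_mul]
  refine vec2_eq ?_ ?_
  · push_cast
    linear_combination (-(s * υF : ℂ)) * hz
  · apply mul_right_cancel₀ hKC
    push_cast
    linear_combination (I * υF * (K 0 - I * K 1)) * hz + (υF * enorm' K ^ 2 : ℂ) * hsC
      + (υF : ℂ) * hK2 + (υF * K 0 ^ 2 + υF * K 1 ^ 2 * (1 - I ^ 2) : ℂ) * I_sq

def wallProfile (c : ℝ) (η : ℝ → ℝ) (ζ : ℝ) : ℝ := Real.exp (-c * ∫ s in (0 : ℝ)..ζ, η s)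

section wallProfile

variable {c : ℝ} {η : ℝ → ℝ}

theorem wallProfile_pos (ζ : ℝ) : 0 < wallProfile c η ζ := Real.exp_pos _

theorem hasDerivAt_wallProfile (hη : Continuous η) (ζ : ℝ) :
    HasDerivAt (wallProfile c η) (wallProfile c η ζ * (-c * η ζ)) ζ :=
  ((hη.integral_hasStrictDerivAt 0 ζ).hasDerivAt.const_mul (-c)).exp

theorem continuous_wallProfile (hη : Continuous η) : Continuous (wallProfile c η) :=
  continuous_iff_continuousAt.mpr fun ζ => (hasDerivAt_wallProfile hη ζ).continuousAt

theorem wallProfile_sq (ζ : ℝ) : wallProfile c η ζ ^ 2 = wallProfile (2 * c) η ζ := by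
  rw [wallProfile, wallProfile, ← Real.exp_nat_mul]
  ring_nf

theorem wallProfile_neg (ζ : ℝ) :
    wallProfile c η (-ζ) = wallProfile c (fun s => -η (-s)) ζ := by
  simp only [wallProfile, intervalIntegral.integral_neg, intervalIntegral.integral_comp_neg,
    neg_zero, intervalIntegral.integral_symm (-ζ) 0]

theorem wallProfile_le_of_le {b R : ℝ} (hc : 0 ≤ c) (hη : Continuous η)
    (hR : ∀ x, R ≤ x → b ≤ η x) {ζ : ℝ} (hζ : R ≤ ζ) :
    wallProfile c η ζ ≤ wallProfile c η R * Real.exp (c * b * R) * Real.exp (-(c * b) * ζ) := by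
  have hsplit : (∫ s in (0 : ℝ)..ζ, η s) = (∫ s in (0 : ℝ)..R, η s) + ∫ s in R..ζ, η s :=
    (intervalIntegral.integral_add_adjacent_intervals (hη.intervalIntegrable _ _)
      (hη.intervalIntegrable _ _)).symm
  have hlower : (ζ - R) * b ≤ ∫ s in R..ζ, η s := by
    simpa using intervalIntegral.integral_mono_on (μ := volume) hζ intervalIntegrable_const
      (hη.intervalIntegrable R ζ) fun x hx => hR x hx.1
  rw [wallProfile, wallProfile, ← Real.exp_add, ← Real.exp_add, Real.exp_le_exp, hsplit]
  nlinarith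

theorem integrableOn_Ioi_wallProfile {b : ℝ} (hc : 0 < c) (hb : 0 < b) (hη : Continuous η)
    (htop : ∀ᶠ x in atTop, b ≤ η x) (a : ℝ) : IntegrableOn (wallProfile c η) (Ioi a) := by
  obtain ⟨R, hR⟩ := eventually_atTop.mp htop
  have hcover : Ioi a ⊆ Icc a (max a R) ∪ Ioi (max a R) := fun x hx => by
    rcases le_or_gt x (max a R) with h | h
    · exact Or.inl ⟨le_of_lt hx, h⟩
    · exact Or.inr h
  refine IntegrableOn.mono_set (IntegrableOn.union ?_ ?_) hcover
  · exact (continuous_wallProfile hη).integrableOn_Icc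
  · refine Integrable.mono' ((exp_neg_integrableOn_Ioi _ (mul_pos hc hb)).const_mul
      (wallProfile c η (max a R) * Real.exp (c * b * max a R)))
      (continuous_wallProfile hη).aestronglyMeasurable.restrict ?_
    refine (ae_restrict_iff' measurableSet_Ioi).mpr (ae_of_all _ fun ζ hζ => ?_)
    rw [Real.norm_of_nonneg (wallProfile_pos ζ).le]
    exact wallProfile_le_of_le hc.le hη (fun x hx => hR x ((le_max_right a R).trans hx)) hζ.le

theorem integrable_wallProfile {b : ℝ} (hc : 0 < c) (hb : 0 < b) (hη : Continuous η)
    (htop : ∀ᶠ x in atTop, b ≤ η x) (hbot : ∀ᶠ x in atBot, η x ≤ -b) :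
    Integrable (wallProfile c η) := by
  have htop' : ∀ᶠ x in atTop, b ≤ -η (-x) :=
    (tendsto_neg_atTop_atBot.eventually hbot).mono fun x hx => le_neg.mpr hx
  have hleft : IntegrableOn (wallProfile c η) (Iio 1) := by
    have := (integrableOn_Ioi_wallProfile hc hb (hη.comp continuous_neg).neg htop' (-1)).comp_neg
    simpa [wallProfile_neg] using this
  rw [← integrableOn_univ, ← Iio_union_Ioi_of_lt zero_lt_one]
  exact hleft.union (integrableOn_Ioi_wallProfile hc hb hη htop 0)

theorem memLp_two_wallProfile {b : ℝ} (hc : 0 < c) (hb : 0 < b) (hη : Continuous η)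
    (htop : ∀ᶠ x in atTop, b ≤ η x) (hbot : ∀ᶠ x in atBot, η x ≤ -b) :
    MemLp (wallProfile c η) 2 := by
  rw [memLp_two_iff_integrable_sq_norm (continuous_wallProfile hη).aestronglyMeasurable]
  simpa only [Real.norm_eq_abs, sq_abs, wallProfile_sq] using
    integrable_wallProfile (by positivity) hb hη htop hbot

theorem hasDerivAt_wallProfile_smul {n : Type*} [Fintype n] (hη : Continuous η) (v : n → ℂ)
    (ζ : ℝ) :
    HasDerivAt (fun ζ => (wallProfile c η ζ : ℂ) • v)
      (((wallProfile c η ζ * (-c * η ζ) : ℝ) : ℂ) • v) ζ :=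
  (hasDerivAt_wallProfile hη ζ).ofReal_comp.smul_const v

theorem dirac_eq_wallProfile_smul {n : Type*} [Fintype n] {M S : Matrix n n ℂ} {v : n → ℂ}
    {e θ : ℝ} (hv : I • (M *ᵥ v) = (e : ℂ) • (S *ᵥ v)) (hce : c * e = -θ)
    (hη : Continuous η) (ζ : ℝ) :
    -I • (M *ᵥ deriv (fun ζ => (wallProfile c η ζ : ℂ) • v) ζ) +
      ((θ * η ζ : ℝ) : ℂ) • (S *ᵥ ((wallProfile c η ζ : ℂ) • v)) = 0 := by
  have hMv : M *ᵥ v = (-I * e) • (S *ᵥ v) := by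
    rw [mul_smul, ← hv, smul_smul, neg_mul, I_mul_I, neg_neg, one_smul]
  rw [(hasDerivAt_wallProfile_smul hη v ζ).deriv, mulVec_smul, mulVec_smul, hMv, smul_smul,
    smul_smul, smul_smul, ← add_smul]
  have hceC : (c : ℂ) * e = -θ := by exact_mod_cast hce
  convert zero_smul ℂ (S *ᵥ v)
  push_cast
  linear_combination (wallProfile c η ζ * η ζ : ℂ) * hceC
    - (wallProfile c η ζ * η ζ * c * e : ℂ) * I_sq

/-- The explicit zero mode of the 1D Dirac operator with a domain-wall mass:
`α(ζ) = exp(-(|θ|/(υ_F|𝔎|)) ∫₀^ζ η) χ_∓` (sign according to the sign of `θ`) is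
differentiable, satisfies `-i M(𝔎) α' + θ η σ₃ α = 0`, and lies in `L²(ℝ; ℂ²)`. -/
theorem dirac_zero_mode
    (η : ℝ → ℝ) (hηc : Continuous η)
    (ηinf : ℝ) (hηinf : 0 < ηinf)
    (hplus : Filter.Tendsto η Filter.atTop (nhds ηinf))
    (hminus : Filter.Tendsto η Filter.atBot (nhds (-ηinf)))
    (υF : ℝ) (hυ : 0 < υF)
    (θ : ℝ) (hθ : θ ≠ 0)
    (𝔎 : Fin 2 → ℝ) (h𝔎 : 𝔎 ≠ 0)
    (𝔎perp : Fin 2 → ℝ) (hperp : 𝔎perp = ![-(𝔎 1), 𝔎 0])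
    (zhat : ℂ) (hz : zhat = (((𝔎perp 0 : ℝ) : ℂ) + Complex.I * ((𝔎perp 1 : ℝ) : ℂ)) / (enorm' 𝔎perp : ℂ))
    (χplus χminus : Fin 2 → ℂ)
    (hχp : χplus = fun i => (1 / Real.sqrt 2 : ℝ) * ![zhat, 1] i)
    (hχm : χminus = fun i => (1 / Real.sqrt 2 : ℝ) * ![zhat, -1] i)
    (α : ℝ → (Fin 2 → ℂ))
    (hα : α = fun ζ =>
      ((Real.exp (-(|θ| / (υF * enorm' 𝔎)) * ∫ s in (0:ℝ)..ζ, η s) : ℝ) : ℂ) •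
        (if 0 < θ then χminus else χplus)) :
    Differentiable ℝ α ∧
    (∀ ζ : ℝ,
      (-Complex.I) • (Mmat υF 𝔎).mulVec (deriv α ζ) +
        ((θ * η ζ : ℝ) : ℂ) • sigma3.mulVec (α ζ) = 0) ∧
    MeasureTheory.MemLp α 2 MeasureTheory.volume := by
  have hK : 0 < enorm' 𝔎 := enorm'_pos h𝔎
  have hz' : zhat * enorm' 𝔎 = I * (𝔎 0 + I * 𝔎 1) := by
    rw [hz, hperp, enorm'_perp, div_mul_cancel₀ _ (by exact_mod_cast hK.ne')]
    simp only [Matrix.cons_val_zero, Matrix.cons_val_one, ofReal_neg]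
    linear_combination (-(𝔎 1 : ℂ)) * I_sq
  set c := |θ| / (υF * enorm' 𝔎)
  set χ := if 0 < θ then χminus else χplus
  obtain ⟨s, hs, hχ, hcs⟩ : ∃ s : ℝ, s ^ 2 = 1 ∧
      χ = ((1 / Real.sqrt 2 : ℝ) : ℂ) • ![zhat, (s : ℂ)] ∧ c * (s * υF * enorm' 𝔎) = -θ := by
    rcases hθ.lt_or_gt with hneg | hpos
    · refine ⟨1, one_pow 2, ?_, ?_⟩
      · rw [show χ = χplus from if_neg hneg.not_gt, hχp]; ext i; fin_cases i <;> simp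
      · simp only [c, abs_of_neg hneg]; field_simp
    · refine ⟨-1, by norm_num, ?_, ?_⟩
      · rw [show χ = χminus from if_pos hpos, hχm]; ext i; fin_cases i <;> simp
      · simp only [c, abs_of_pos hpos]; field_simp
  have hv : I • (Mmat υF 𝔎 *ᵥ χ) = ((s * υF * enorm' 𝔎 : ℝ) : ℂ) • (sigma3 *ᵥ χ) := by
    rw [hχ, mulVec_smul, mulVec_smul, smul_comm, I_smul_Mmat_mulVec υF hK.ne' hz' hs, smul_comm]
  have htop : ∀ᶠ x in atTop, ηinf / 2 ≤ η x :=
    hplus.eventually (eventually_ge_nhds (half_lt_self hηinf))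
  have hbot : ∀ᶠ x in atBot, η x ≤ -(ηinf / 2) :=
    hminus.eventually (eventually_le_nhds (by linarith))
  subst hα
  refine ⟨fun ζ => (hasDerivAt_wallProfile_smul hηc χ ζ).differentiableAt,
    dirac_eq_wallProfile_smul hv hcs hηc, ?_⟩
  have hprofile : MemLp (wallProfile c η) 2 :=
    memLp_two_wallProfile (by positivity) (half_pos hηinf) hηc htop hbot
  exact (memLp_top_const χ).smul (hprofile.ofReal (K := ℂ))
end wallProfile
end
end
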